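/- For each positive integer ℓ, there are (up to isomorphism) only finitely many seed star-shaped simplicial spheres of Picard number ℓ that admit a Z₂-characteristic map. -/

import Mathlib

def IsComplex {V : Type*} (K : Set (Finset V)) : Prop :=
  ∀ s ∈ K, ∀ t, t ⊆ s → t ∈ K

def IsFacet {V : Type*} (K : Set (Finset V)) (s : Finset V) : Prop :=
  s ∈ K ∧ ∀ t ∈ K, s ⊆ t → t = s

/-- The cone spanned by the rays `f w`, `w ∈ σ`, in `ℝⁿ`. -/
def coneOf {V : Type*} {n : ℕ} (f : V → Fin n → ℝ) (σ : Finset V) : Set (Fin n → ℝ) :=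
  {x | ∃ c : V → ℝ, (∀ w, 0 ≤ c w) ∧ x = ∑ w ∈ σ, c w • f w}

/-- `K` is a star-shaped simplicial sphere of dimension `n - 1`: a pure simplicial complex
whose faces are realized as the cones of a complete simplicial fan in `ℝⁿ`. -/
def IsStarShapedSphere {V : Type*} [DecidableEq V] (K : Set (Finset V)) (n : ℕ) : Prop :=
  IsComplex K ∧ ∅ ∈ K ∧ (∀ w : V, ({w} : Finset V) ∈ K) ∧
  (∀ s, IsFacet K s → s.card = n) ∧
  ∃ f : V → Fin n → ℝ,
    (∀ σ ∈ K, LinearIndependent ℝ fun w : {x : V // x ∈ σ} => f w.val) ∧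
    (∀ x : Fin n → ℝ, ∃ σ ∈ K, x ∈ coneOf f σ) ∧
    (∀ σ ∈ K, ∀ τ ∈ K, coneOf f σ ∩ coneOf f τ = coneOf f (σ ∩ τ))

/-- The simplicial wedge `wed_v K = (I ⋆ link_K {v}) ∪ (∂I ⋆ (K ∖ {v}))` on the vertex set
`V ⊕ Unit`, the two new vertices being `v₁ = Sum.inl v` and `v₂ = Sum.inr ()`. -/
def wed {V : Type*} [DecidableEq V] (K : Set (Finset V)) (v : V) :
    Set (Finset (V ⊕ Unit)) :=
  {s | ∃ a : Finset (V ⊕ Unit), a ⊆ ({Sum.inl v, Sum.inr ()} : Finset (V ⊕ Unit)) ∧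
    ∃ τ : Finset V, v ∉ τ ∧ τ ∈ K ∧ s = a ∪ τ.image Sum.inl ∧
      (insert v τ ∈ K ∨ a.card ≤ 1)}

/-- `K` is a seed: it is not isomorphic to any simplicial wedge. -/
def IsSeed {V : Type*} [DecidableEq V] (K : Set (Finset V)) : Prop :=
  ¬ ∃ (W : Type) (_ : DecidableEq W) (L : Set (Finset W)) (u : W) (e : V ≃ (W ⊕ Unit)),
      ∀ s : Finset V, s ∈ K ↔ s.image e ∈ wed L u
section ConeLemmas
variable {V : Type*} [DecidableEq V] [Fintype V] {n : ℕ} {f : V → Fin n → ℝ}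
  {K : Set (Finset V)}

lemma cone_mono {σ s : Finset V} (h : σ ⊆ s) : coneOf f σ ⊆ coneOf f s := by
  rintro x ⟨c, hc, rfl⟩
  refine ⟨fun w => if w ∈ σ then c w else 0, fun w => by dsimp only; split <;> [exact hc w; exact le_rfl], ?_⟩
  rw [← Finset.sum_subset h (fun w _ hw => by simp [hw])]
  exact Finset.sum_congr rfl fun w hw => by simp [hw]

lemma rep_unique {s : Finset V}
    (hli : LinearIndependent ℝ fun w : {x : V // x ∈ s} => f w.val)
    {c d : V → ℝ} (h : ∑ w ∈ s, c w • f w = ∑ w ∈ s, d w • f w) :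
    ∀ w ∈ s, c w = d w := by
  have h2 := Fintype.linearIndependent_iff.1 hli (fun i => c i.val - d i.val) ?_
  · intro w hw
    have := h2 ⟨w, hw⟩
    linarith
  · have : ∑ i : {x : V // x ∈ s}, (c i.val - d i.val) • f i.val
        = ∑ w ∈ s, (c w - d w) • f w := by
      rw [Finset.univ_eq_attach, Finset.sum_attach s (fun w => (c w - d w) • f w)]
    rw [this]
    simp only [sub_smul, Finset.sum_sub_distrib, h, sub_self]

lemma exists_facet_superset (hK : IsComplex K) {σ : Finset V} (hσ : σ ∈ K) :
    ∃ s, IsFacet K s ∧ σ ⊆ s := by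
  have hfin : {t | t ∈ K ∧ σ ⊆ t}.Finite := Set.toFinite _
  obtain ⟨s, ⟨hsK, hσs⟩, hmax⟩ := hfin.exists_maximalFor (fun t => t.card) _ ⟨σ, hσ, subset_rfl⟩
  refine ⟨s, ⟨hsK, fun t htK hst => ?_⟩, hσs⟩
  have := hmax ⟨htK, hσs.trans hst⟩ (Finset.card_le_card hst)
  exact (Finset.eq_of_subset_of_card_le hst this.ge).symm

lemma cone_isClosed {σ : Finset V}
    (hli : LinearIndependent ℝ fun w : {x : V // x ∈ σ} => f w.val) :
    IsClosed (coneOf f σ) := by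
  classical
  let φ : ({x : V // x ∈ σ} → ℝ) →ₗ[ℝ] (Fin n → ℝ) :=
    Fintype.linearCombination ℝ (fun i : {x : V // x ∈ σ} => f i.val)
  have hφ : ∀ c, φ c = ∑ i : {x : V // x ∈ σ}, c i • f i.val := by
    intro c; simp [φ, Fintype.linearCombination_apply]
  have hker : LinearMap.ker φ = ⊥ := by
    rw [LinearMap.ker_eq_bot']
    intro c hc
    funext i
    exact Fintype.linearIndependent_iff.1 hli c (by rw [← hφ c, hc]) i
  have hemb := LinearMap.isClosedEmbedding_of_injective hker (f := φ)
  have horth : IsClosed {c : {x : V // x ∈ σ} → ℝ | ∀ i, 0 ≤ c i} := by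
    have : {c : {x : V // x ∈ σ} → ℝ | ∀ i, 0 ≤ c i}
        = ⋂ i, (fun c : {x : V // x ∈ σ} → ℝ => c i) ⁻¹' Set.Ici 0 := by
      ext c; simp [Set.mem_iInter]
    rw [this]
    exact isClosed_iInter fun i => IsClosed.preimage (continuous_apply i) isClosed_Ici
  have himg : coneOf f σ = φ '' {c | ∀ i, 0 ≤ c i} := by
    ext x
    constructor
    · rintro ⟨c, hc, rfl⟩
      refine ⟨fun i => c i.val, fun i => hc _, ?_⟩
      rw [hφ, Finset.univ_eq_attach, Finset.sum_attach σ (fun w => c w • f w)]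
    · rintro ⟨c, hc, rfl⟩
      refine ⟨fun w => if h : w ∈ σ then c ⟨w, h⟩ else 0,
        fun w => by dsimp only; split <;> [exact hc _; exact le_rfl], ?_⟩
      rw [hφ, Finset.univ_eq_attach,
        ← Finset.sum_attach σ (fun w => (if h : w ∈ σ then c ⟨w, h⟩ else 0) • f w)]
      exact Finset.sum_congr rfl fun i _ => by simp [i.prop]
  rw [himg]
  exact hemb.isClosedMap _ horth

end ConeLemmas
set_option linter.unusedSectionVars false

section FanLemma
variable {V : Type*} [DecidableEq V] [Fintype V] {n : ℕ} {f : V → Fin n → ℝ}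
  {K : Set (Finset V)}

/-- In a complete simplicial fan, every face `τ` is contained in a facet avoiding any
prescribed vertex `w ∉ τ`. -/
lemma exists_facet_avoiding (hK : IsComplex K)
    (hli : ∀ σ ∈ K, LinearIndependent ℝ fun w : {x : V // x ∈ σ} => f w.val)
    (hcover : ∀ x : Fin n → ℝ, ∃ σ ∈ K, x ∈ coneOf f σ)
    (hglue : ∀ σ ∈ K, ∀ τ ∈ K, coneOf f σ ∩ coneOf f τ = coneOf f (σ ∩ τ))
    {τ : Finset V} (hτ : τ ∈ K) {w : V} (hw : w ∉ τ) :
    ∃ s, IsFacet K s ∧ τ ⊆ s ∧ w ∉ s := by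
  by_contra hcon
  push_neg at hcon
  -- every facet containing τ contains w
  have hfw : ∀ s, IsFacet K s → τ ⊆ s → w ∈ s := hcon
  set z : Fin n → ℝ := ∑ t ∈ τ, f t with hz
  -- Subclaim 1 : no cone containing z - ε f w contains τ
  have sub1 : ∀ ε : ℝ, 0 < ε → ∀ σ' ∈ K, z - ε • f w ∈ coneOf f σ' → ¬ τ ⊆ σ' := by
    intro ε hε σ' hσ' hx hτσ'
    obtain ⟨s, hs, hσs⟩ := exists_facet_superset hK hσ'
    have hws : w ∈ s := hfw s hs (hτσ'.trans hσs)
    have hxs : z - ε • f w ∈ coneOf f s := cone_mono hσs hx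
    obtain ⟨c, hc, hcs⟩ := hxs
    set d : V → ℝ := fun u => if u ∈ τ then 1 else if u = w then -ε else 0 with hd
    have hds : z - ε • f w = ∑ u ∈ s, d u • f u := by
      have hsub : insert w τ ⊆ s := Finset.insert_subset hws (hτσ'.trans hσs)
      rw [← Finset.sum_subset hsub (fun u _ hu => by
        have h1 : u ∉ τ := fun h => hu (Finset.mem_insert_of_mem h)
        have h2 : u ≠ w := fun h => hu (h ▸ Finset.mem_insert_self w τ)
        simp [hd, h1, h2])]
      rw [Finset.sum_insert hw]
      have : ∀ u ∈ τ, d u • f u = f u := fun u hu => by simp [hd, hu]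
      rw [Finset.sum_congr rfl this]
      simp [hd, hw, sub_eq_iff_eq_add, hz]
    have := rep_unique (hli s hs.1) (hcs.symm.trans hds) w hws
    have hcw := hc w
    rw [this] at hcw
    simp [hd, hw] at hcw
    linarith
  -- choose cones for the sequence
  have hchoice : ∀ k : ℕ, ∃ σ ∈ K, z - ((1 : ℝ)/(k+1)) • f w ∈ coneOf f σ :=
    fun k => hcover _
  choose g hgK hgmem using hchoice
  obtain ⟨t, ht⟩ := Finite.exists_infinite_fiber g
  have hS : (g ⁻¹' {t}).Infinite := Set.infinite_coe_iff.1 ht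
  obtain ⟨k₀, hk₀⟩ := hS.nonempty
  have htK : t ∈ K := hk₀ ▸ hgK k₀
  -- z is in the closure of the cone of t
  have hzcl : z ∈ closure (coneOf f t) := by
    rw [Metric.mem_closure_iff]
    intro δ hδ
    obtain ⟨N, hN⟩ := exists_nat_gt (‖f w‖ / δ)
    obtain ⟨k, hkS, hkN⟩ := hS.exists_gt N
    refine ⟨z - ((1 : ℝ)/(k+1)) • f w, by rw [← show g k = t from hkS]; exact hgmem k, ?_⟩
    rw [dist_eq_norm]
    have : z - (z - ((1:ℝ)/(k+1)) • f w) = ((1:ℝ)/(k+1)) • f w := by abel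
    rw [this, norm_smul]
    have hk1 : (0:ℝ) < k + 1 := by positivity
    have hnorm : ‖(1:ℝ)/(k+1)‖ = 1/((k:ℝ)+1) := by
      rw [Real.norm_eq_abs, abs_of_pos (by positivity)]
    rw [hnorm]
    have hNk : (N : ℝ) < k + 1 := by exact_mod_cast Nat.lt_succ_of_lt hkN
    have h1 : ‖f w‖ / δ < k + 1 := lt_trans hN hNk
    have h2 : ‖f w‖ < δ * (k + 1) := by
      rw [div_lt_iff₀ hδ] at h1; linarith
    rw [div_mul_eq_mul_div, div_lt_iff₀ hk1]
    linarith
  have hzt : z ∈ coneOf f t := by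
    rw [← (cone_isClosed (hli t htK)).closure_eq]; exact hzcl
  have hzτ : z ∈ coneOf f τ := ⟨fun _ => 1, fun _ => zero_le_one, by simp [hz]⟩
  have hzint : z ∈ coneOf f (t ∩ τ) := by
    rw [← hglue t htK τ hτ]; exact ⟨hzt, hzτ⟩
  obtain ⟨c, hc, hzeq⟩ := hzint
  set d : V → ℝ := fun u => if u ∈ t ∩ τ then c u else 0 with hd
  have hdτ : ∑ u ∈ τ, d u • f u = ∑ u ∈ τ, (1:ℝ) • f u := by
    rw [← Finset.sum_subset (Finset.inter_subset_right (s₁ := t))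
      (fun u _ hu => by simp only [hd]; rw [if_neg hu, zero_smul])]
    have : ∑ u ∈ t ∩ τ, d u • f u = ∑ u ∈ t ∩ τ, c u • f u :=
      Finset.sum_congr rfl fun u hu => by simp only [hd]; rw [if_pos hu]
    rw [this, ← hzeq]
    simp [hz]
  have hrep := rep_unique (hli τ hτ) hdτ
  have hτt : τ ⊆ t := by
    intro u hu
    by_contra hut
    have h1 := hrep u hu
    simp only [hd] at h1
    rw [if_neg (fun hmem => hut (Finset.mem_of_mem_inter_left hmem))] at h1
    exact zero_ne_one h1
  have hk₀K : z - ((1:ℝ)/(k₀+1)) • f w ∈ coneOf f t := by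
    rw [← show g k₀ = t from hk₀]; exact hgmem k₀
  exact sub1 _ (by positivity) t htK hk₀K hτt
end FanLemma
section Z2
open Module

variable {m n : ℕ}

/-- The linear functional `y ↦ ∑ i, a i * y i` on `(ZMod 2)ⁿ`. -/
def rowFun (a : Fin n → ZMod 2) : (Fin n → ZMod 2) →ₗ[ZMod 2] ZMod 2 where
  toFun y := ∑ i, a i * y i
  map_add' y z := by simp [mul_add, Finset.sum_add_distrib]
  map_smul' c y := by simp [Finset.mul_sum, mul_left_comm]

lemma rowFun_comm (a b : Fin n → ZMod 2) : rowFun a b = rowFun b a := by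
  simp [rowFun, mul_comm]

lemma rowFun_single (y : Fin n → ZMod 2) (j : Fin n) :
    rowFun y (Pi.single j 1) = y j := by
  simp [rowFun, Pi.single_apply, mul_ite, Finset.sum_ite_eq']

/-- The "transpose" map `y ↦ (u ↦ ⟨lam u, y⟩)`. -/
def Tmap (lam : Fin m → Fin n → ZMod 2) :
    (Fin n → ZMod 2) →ₗ[ZMod 2] (Fin m → ZMod 2) :=
  LinearMap.pi (fun u => rowFun (lam u))

lemma Tmap_apply (lam : Fin m → Fin n → ZMod 2) (y : Fin n → ZMod 2) (u : Fin m) :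
    Tmap lam y u = rowFun (lam u) y := rfl

lemma span_top_of_facet (lam : Fin m → Fin n → ZMod 2) {s : Finset (Fin m)}
    (hcard : s.card = n)
    (hli : LinearIndependent (ZMod 2) fun i : {x : Fin m // x ∈ s} => lam i.val) :
    Submodule.span (ZMod 2) (Set.range fun i : {x : Fin m // x ∈ s} => lam i.val) = ⊤ := by
  rcases Nat.eq_zero_or_pos n with hn | hn
  · subst hn
    rw [Submodule.eq_top_iff']
    intro x
    have : x = 0 := funext fun i => absurd i.2 (by omega)
    rw [this]; exact Submodule.zero_mem _
  · have hne : Nonempty {x : Fin m // x ∈ s} := by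
      rw [← Fintype.card_pos_iff, Fintype.card_coe, hcard]; exact hn
    have hcard' : Fintype.card {x : Fin m // x ∈ s} = finrank (ZMod 2) (Fin n → ZMod 2) := by
      rw [Fintype.card_coe, hcard, Module.finrank_pi, Fintype.card_fin]
    have := (basisOfLinearIndependentOfCardEqFinrank hli hcard').span_eq
    rwa [coe_basisOfLinearIndependentOfCardEqFinrank] at this

/-- A functional vanishing on the rows of a facet vanishes. -/
lemma functional_eq_zero (lam : Fin m → Fin n → ZMod 2) {s : Finset (Fin m)}
    (hcard : s.card = n)
    (hli : LinearIndependent (ZMod 2) fun i : {x : Fin m // x ∈ s} => lam i.val)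
    (y : Fin n → ZMod 2) (h : ∀ u ∈ s, rowFun (lam u) y = 0) : y = 0 := by
  have hspan := span_top_of_facet lam hcard hli
  have hker : Submodule.span (ZMod 2)
      (Set.range fun i : {x : Fin m // x ∈ s} => lam i.val) ≤ LinearMap.ker (rowFun y) := by
    rw [Submodule.span_le]
    rintro _ ⟨i, rfl⟩
    simp only [SetLike.mem_coe, LinearMap.mem_ker]
    rw [rowFun_comm]
    exact h i.val i.2
  rw [hspan, top_le_iff] at hker
  funext j
  have : rowFun y (Pi.single j 1) = 0 := by
    rw [← LinearMap.mem_ker, hker]; trivial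
  rwa [rowFun_single] at this

lemma Tmap_injective (lam : Fin m → Fin n → ZMod 2) {s : Finset (Fin m)}
    (hcard : s.card = n)
    (hli : LinearIndependent (ZMod 2) fun i : {x : Fin m // x ∈ s} => lam i.val) :
    Function.Injective (Tmap lam) := by
  rw [← LinearMap.ker_eq_bot, LinearMap.ker_eq_bot']
  intro y hy
  exact functional_eq_zero lam hcard hli y fun u _ => by
    rw [← Tmap_apply, hy]; rfl

/-- Pigeonhole: if `2^ℓ ≤ m` then some nonzero-pattern functional exists. -/
lemma exists_indicator (lam : Fin m → Fin n → ZMod 2) {s : Finset (Fin m)} {ℓ : ℕ}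
    (hcard : s.card = n)
    (hli : LinearIndependent (ZMod 2) fun i : {x : Fin m // x ∈ s} => lam i.val)
    (hmn : m = n + ℓ) (hm : 2 ^ ℓ ≤ m) :
    ∃ (v w : Fin m) (y : Fin n → ZMod 2),
      ∀ x : Fin m, rowFun (lam x) y = if x = v ∨ x = w then 1 else 0 := by
  classical
  set P : Submodule (ZMod 2) (Fin m → ZMod 2) := LinearMap.range (Tmap lam) with hP
  have hfinQ : Finite ((Fin m → ZMod 2) ⧸ P) :=
    Finite.of_surjective _ (Submodule.mkQ_surjective P)
  letI : Fintype ((Fin m → ZMod 2) ⧸ P) := Fintype.ofFinite _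
  have hinjT := Tmap_injective lam hcard hli
  have hrank : finrank (ZMod 2) ((Fin m → ZMod 2) ⧸ P) = ℓ := by
    have h1 := Submodule.finrank_quotient_add_finrank P
    have h2 : finrank (ZMod 2) P = n := by
      rw [hP, LinearMap.finrank_range_of_inj hinjT, Module.finrank_pi, Fintype.card_fin]
    have h3 : finrank (ZMod 2) (Fin m → ZMod 2) = m := by
      rw [Module.finrank_pi, Fintype.card_fin]
    omega
  have hcardQ : Fintype.card ((Fin m → ZMod 2) ⧸ P) = 2 ^ ℓ := by
    rw [Module.card_fintype (Module.finBasis (ZMod 2) _), ZMod.card 2, hrank, Fintype.card_fin]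
  set g : Fin m → (Fin m → ZMod 2) ⧸ P :=
    fun u => Submodule.Quotient.mk (Pi.single u 1) with hg
  by_cases hinj : Function.Injective g
  · by_cases hzero : ∀ u, g u ≠ 0
    · exfalso
      have hginj : Function.Injective (fun u => (⟨g u, hzero u⟩ : {q : _ ⧸ P // q ≠ 0})) :=
        fun a b h => hinj (congrArg Subtype.val h)
      have hle := Fintype.card_le_of_injective _ hginj
      have hsub : Fintype.card {q : (Fin m → ZMod 2) ⧸ P // q ≠ 0} = 2 ^ ℓ - 1 := by
        rw [Fintype.card_subtype_compl, hcardQ, Fintype.card_subtype_eq]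
      rw [Fintype.card_fin, hsub] at hle
      have : 1 ≤ 2 ^ ℓ := Nat.one_le_two_pow
      omega
    · push_neg at hzero
      obtain ⟨u, hu⟩ := hzero
      rw [hg] at hu
      rw [Submodule.Quotient.mk_eq_zero] at hu
      obtain ⟨y, hy⟩ := hu
      refine ⟨u, u, y, fun x => ?_⟩
      have := congrFun hy x
      rw [Tmap_apply] at this
      rw [this, Pi.single_apply]
      by_cases hx : x = u <;> simp [hx]
  · rw [Function.not_injective_iff] at hinj
    obtain ⟨v, w, hvw, hne⟩ := hinj
    rw [hg] at hvw
    rw [Submodule.Quotient.eq] at hvw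
    obtain ⟨y, hy⟩ := hvw
    refine ⟨v, w, y, fun x => ?_⟩
    have := congrFun hy x
    rw [Tmap_apply] at this
    rw [this]
    simp only [Pi.sub_apply, Pi.single_apply]
    rcases eq_or_ne x v with rfl | hxv
    · simp [hne]
    · rcases eq_or_ne x w with rfl | hxw
      · simp [hxv, (by decide : (0 : ZMod 2) - 1 = 1)]
      · simp [hxv, hxw]

end Z2
section Wedge
variable {m : ℕ}

/-- The equivalence `Fin m ≃ {x ≠ w} ⊕ Unit`. -/
def eW (w : Fin m) : Fin m ≃ ({x : Fin m // x ≠ w} ⊕ Unit) where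
  toFun x := if h : x = w then Sum.inr () else Sum.inl ⟨x, h⟩
  invFun := Sum.elim Subtype.val (fun _ => w)
  left_inv x := by by_cases h : x = w <;> simp [h]
  right_inv z := by
    rcases z with z | z
    · simp [z.prop]
    · simp

lemma eW_apply_ne (w : Fin m) {x : Fin m} (h : x ≠ w) :
    eW w x = Sum.inl ⟨x, h⟩ := dif_neg h

lemma eW_apply_self (w : Fin m) : eW w w = Sum.inr () := dif_pos rfl

lemma not_isSeed {K : Set (Finset (Fin m))} {v w : Fin m} (hvw : v ≠ w)
    (hK : IsComplex K)
    (hA : ∀ τ, τ ∈ K → v ∉ τ → w ∉ τ → insert v τ ∈ K ∧ insert w τ ∈ K) :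
    ¬ IsSeed K := by
  classical
  intro hseed
  set u₀ : {x : Fin m // x ≠ w} := ⟨v, hvw⟩ with hu₀
  set L : Set (Finset {x : Fin m // x ≠ w}) :=
    {τ | (u₀ ∉ τ ∧ τ.image Subtype.val ∈ K) ∨
      (u₀ ∈ τ ∧ ((τ.erase u₀).image Subtype.val ∪ {v, w}) ∈ K)} with hL
  apply hseed
  refine ⟨{x : Fin m // x ≠ w}, inferInstance, L, u₀, eW w, fun s => ?_⟩
  have hmem : ∀ x : Fin m, x ∈ s ↔ eW w x ∈ s.image (eW w) := by
    intro x
    constructor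
    · exact Finset.mem_image_of_mem _
    · intro h
      obtain ⟨x', hx', hex⟩ := Finset.mem_image.1 h
      rwa [← (eW w).injective hex]
  constructor
  · -- forward
    intro hs
    have hsubK : s \ {v, w} ∈ K := hK s hs _ (Finset.sdiff_subset)
    refine ⟨(s ∩ {v, w}).image (eW w), ?_, (s \ {v, w}).subtype (· ≠ w), ?_, ?_, ?_, ?_⟩
    · -- a ⊆ {inl u₀, inr ()}
      intro z hz
      obtain ⟨x, hx, rfl⟩ := Finset.mem_image.1 hz
      have hx2 := Finset.mem_insert.1 (Finset.mem_of_mem_inter_right hx)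
      simp only [Finset.mem_singleton] at hx2
      rcases hx2 with rfl | rfl
      · rw [eW_apply_ne w hvw]; simp [hu₀]
      · rw [eW_apply_self]; simp
    · -- u₀ ∉ τ
      simp only [Finset.mem_subtype, hu₀]
      intro hmem'
      exact (Finset.mem_sdiff.1 hmem').2 (by simp)
    · -- τ ∈ L
      left
      constructor
      · simp only [Finset.mem_subtype, hu₀]
        intro hmem'
        exact (Finset.mem_sdiff.1 hmem').2 (by simp)
      · have : ((s \ {v, w}).subtype (· ≠ w)).image Subtype.val = s \ {v, w} := by
          ext x
          simp only [Finset.mem_image, Finset.mem_subtype, Subtype.exists,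
            exists_and_left, exists_prop, exists_eq_right_right]
          constructor
          · rintro ⟨h1, h2⟩; exact h1
          · intro h1
            refine ⟨h1, ?_⟩
            intro rfl'
            exact (Finset.mem_sdiff.1 h1).2 (by simp [rfl'])
        rw [this]; exact hsubK
    · -- decomposition
      ext z
      simp only [Finset.mem_union, Finset.mem_image]
      constructor
      · rintro ⟨x, hx, rfl⟩
        by_cases hxv : x = v
        · subst hxv; left; exact ⟨x, Finset.mem_inter.2 ⟨hx, by simp⟩, rfl⟩
        · by_cases hxw : x = w
          · subst hxw; left; exact ⟨x, Finset.mem_inter.2 ⟨hx, by simp⟩, rfl⟩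
          · right
            refine ⟨⟨x, hxw⟩, Finset.mem_subtype.2 (Finset.mem_sdiff.2 ⟨hx, by simp [hxv, hxw]⟩), ?_⟩
            rw [eW_apply_ne w hxw]
      · rintro (⟨x, hx, rfl⟩ | ⟨y, hy, rfl⟩)
        · exact ⟨x, Finset.mem_of_mem_inter_left hx, rfl⟩
        · refine ⟨y.val, (Finset.mem_sdiff.1 (Finset.mem_subtype.1 hy)).1, ?_⟩
          rw [eW_apply_ne w y.prop]
    · -- condition
      by_cases hboth : v ∈ s ∧ w ∈ s
      · left
        right
        refine ⟨Finset.mem_insert_self _ _, ?_⟩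
        rw [Finset.erase_insert (by
          simp only [Finset.mem_subtype, hu₀]
          intro hmem'
          exact (Finset.mem_sdiff.1 hmem').2 (by simp))]
        have himg : ((s \ {v, w}).subtype (· ≠ w)).image Subtype.val = s \ {v, w} := by
          ext x
          simp only [Finset.mem_image, Finset.mem_subtype, Subtype.exists,
            exists_and_left, exists_prop, exists_eq_right_right]
          constructor
          · rintro ⟨h1, h2⟩; exact h1
          · intro h1
            refine ⟨h1, ?_⟩
            intro rfl'
            exact (Finset.mem_sdiff.1 h1).2 (by simp [rfl'])
        rw [himg, Finset.sdiff_union_of_subset (by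
          intro x hx
          rcases Finset.mem_insert.1 hx with rfl | hx2
          · exact hboth.1
          · rw [Finset.mem_singleton.1 hx2]; exact hboth.2)]
        exact hs
      · right
        calc ((s ∩ {v, w}).image (eW w)).card ≤ (s ∩ {v, w}).card := Finset.card_image_le
          _ ≤ 1 := by
            by_cases hv : v ∈ s
            · have hw' : w ∉ s := fun hw' => hboth ⟨hv, hw'⟩
              have : s ∩ {v, w} ⊆ {v} := by
                intro x hx
                have h1 := Finset.mem_of_mem_inter_left hx
                have h2 := Finset.mem_insert.1 (Finset.mem_of_mem_inter_right hx)
                simp only [Finset.mem_singleton] at h2 ⊢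
                rcases h2 with rfl | rfl
                · rfl
                · exact absurd h1 hw'
              exact (Finset.card_le_card this).trans (by simp)
            · have : s ∩ {v, w} ⊆ {w} := by
                intro x hx
                have h1 := Finset.mem_of_mem_inter_left hx
                have h2 := Finset.mem_insert.1 (Finset.mem_of_mem_inter_right hx)
                simp only [Finset.mem_singleton] at h2 ⊢
                rcases h2 with rfl | rfl
                · exact absurd h1 hv
                · rfl
              exact (Finset.card_le_card this).trans (by simp)
  · -- backward
    rintro ⟨a, ha, τ, huτ, hτL, heq, hcond⟩
    have hws : w ∈ s ↔ Sum.inr () ∈ a := by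
      rw [hmem w, eW_apply_self, heq, Finset.mem_union]
      constructor
      · rintro (h | h)
        · exact h
        · obtain ⟨y, _, hy⟩ := Finset.mem_image.1 h
          exact absurd hy (by simp)
      · exact Or.inl
    have hvs : v ∈ s ↔ Sum.inl u₀ ∈ a := by
      rw [hmem v, eW_apply_ne w hvw, heq, Finset.mem_union]
      constructor
      · rintro (h | h)
        · exact h
        · obtain ⟨y, hy, hy2⟩ := Finset.mem_image.1 h
          rw [Sum.inl.injEq] at hy2
          exact absurd (hy2 ▸ hy) (by rw [← hu₀] at hy2 ⊢; rw [hy2] at hy; exact fun _ => huτ hy)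
      · exact Or.inl
    have hxs : ∀ (x : Fin m) (hx : x ≠ w), x ≠ v → (x ∈ s ↔ (⟨x, hx⟩ : {x : Fin m // x ≠ w}) ∈ τ) := by
      intro x hx hxv
      rw [hmem x, eW_apply_ne w hx, heq, Finset.mem_union]
      constructor
      · rintro (h | h)
        · have := ha h
          rcases Finset.mem_insert.1 this with h2 | h2
          · rw [Sum.inl.injEq] at h2
            exact absurd (congrArg Subtype.val h2) (by simpa [hu₀] using hxv)
          · exact absurd (Finset.mem_singleton.1 h2) (by simp)
        · obtain ⟨y, hy, hy2⟩ := Finset.mem_image.1 h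
          rw [Sum.inl.injEq] at hy2
          rwa [← hy2]
      · intro h
        right
        exact Finset.mem_image_of_mem _ h
    have himg : τ.image Subtype.val = s \ {v, w} := by
      ext x
      constructor
      · intro h
        obtain ⟨y, hy, rfl⟩ := Finset.mem_image.1 h
        have hyv : y.val ≠ v := by
          intro hyv
          apply huτ
          have : y = u₀ := Subtype.ext (by rw [hyv, hu₀])
          rwa [← this]
        rw [Finset.mem_sdiff]
        refine ⟨?_, by simp [hyv, y.prop]⟩
        rw [hxs y.val y.prop hyv]
        convert hy
      · intro h
        rw [Finset.mem_sdiff] at h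
        have hxv : x ≠ v := fun h' => h.2 (by simp [h'])
        have hxw : x ≠ w := fun h' => h.2 (by simp [h'])
        have := (hxs x hxw hxv).1 h.1
        exact Finset.mem_image_of_mem _ this
    have hτK : τ.image Subtype.val ∈ K := by
      rcases hτL with ⟨_, h⟩ | ⟨h, _⟩
      · exact h
      · exact absurd h huτ
    have hsdiffK : s \ {v, w} ∈ K := himg ▸ hτK
    by_cases hv : v ∈ s <;> by_cases hw : w ∈ s
    · -- both
      rcases hcond with hins | hcard
      · rcases hins with ⟨h1, _⟩ | ⟨_, h2⟩
        · exact absurd (Finset.mem_insert_self _ _) h1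
        · rw [Finset.erase_insert huτ, himg] at h2
          rwa [Finset.sdiff_union_of_subset (by
            intro x hx
            rcases Finset.mem_insert.1 hx with rfl | hx2
            · exact hv
            · rw [Finset.mem_singleton.1 hx2]; exact hw)] at h2
      · exfalso
        have hsub : ({Sum.inl u₀, Sum.inr ()} : Finset ({x : Fin m // x ≠ w} ⊕ Unit)) ⊆ a := by
          intro z hz
          rcases Finset.mem_insert.1 hz with rfl | hz2
          · exact hvs.1 hv
          · rw [Finset.mem_singleton.1 hz2]; exact hws.1 hw
        have h2 : ({Sum.inl u₀, Sum.inr ()} : Finset ({x : Fin m // x ≠ w} ⊕ Unit)).card = 2 := by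
          rw [Finset.card_insert_of_notMem (by simp), Finset.card_singleton]
        have := Finset.card_le_card hsub
        omega
    · -- v only
      have hseq : s = insert v (s \ {v, w}) := by
        ext x
        simp only [Finset.mem_insert, Finset.mem_sdiff, Finset.mem_singleton]
        constructor
        · intro hxin
          by_cases hxv : x = v
          · exact Or.inl hxv
          · right
            refine ⟨hxin, ?_⟩
            rintro (rfl | rfl)
            · exact hxv rfl
            · exact hw hxin
        · rintro (rfl | ⟨h1, _⟩)
          · exact hv
          · exact h1
      rw [hseq]
      exact (hA _ hsdiffK (by simp) (by simp [Ne.symm hvw])).1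
    · -- w only
      have hseq : s = insert w (s \ {v, w}) := by
        ext x
        simp only [Finset.mem_insert, Finset.mem_sdiff, Finset.mem_singleton]
        constructor
        · intro hxin
          by_cases hxw : x = w
          · exact Or.inl hxw
          · right
            refine ⟨hxin, ?_⟩
            rintro (rfl | rfl)
            · exact hv hxin
            · exact hxw rfl
        · rintro (rfl | ⟨h1, _⟩)
          · exact hw
          · exact h1
      rw [hseq]
      exact (hA _ hsdiffK (by simp) (by simp [Ne.symm hvw])).2
    · -- neither
      have hseq : s = s \ {v, w} := by
        ext x
        simp only [Finset.mem_sdiff, Finset.mem_insert, Finset.mem_singleton]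
        constructor
        · intro hxin
          refine ⟨hxin, ?_⟩
          rintro (rfl | rfl)
          · exact hv hxin
          · exact hw hxin
        · exact fun h => h.1
      rw [hseq]
      exact hsdiffK
end Wedge
section Main

/-- The Choi–Park style bound: a seed star-shaped sphere with a `ℤ₂`-characteristic map
has fewer than `2 ^ ℓ` vertices. -/
lemma seed_bound {m n ℓ : ℕ} {K : Set (Finset (Fin m))} (hS : IsStarShapedSphere K n)
    (hmn : m = n + ℓ) (hseed : IsSeed K)
    (hchar : ∃ lam : Fin m → Fin n → ZMod 2, ∀ s, IsFacet K s →
      LinearIndependent (ZMod 2) fun i : {x : Fin m // x ∈ s} => lam i.val) :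
    m < 2 ^ ℓ := by
  by_contra hm
  push_neg at hm
  obtain ⟨hK, hempty, hvert, hpure, f, hli, hcover, hglue⟩ := hS
  obtain ⟨lam, hlam⟩ := hchar
  obtain ⟨s₀, hs₀, -⟩ := exists_facet_superset hK hempty
  obtain ⟨v, w, y, hy⟩ := exists_indicator lam (hpure s₀ hs₀) (hlam s₀ hs₀) hmn hm
  have hfacetmeet : ∀ s, IsFacet K s → ∃ u ∈ s, u = v ∨ u = w := by
    intro s hs
    by_contra hno
    push_neg at hno
    have hzero : ∀ u ∈ s, rowFun (lam u) y = 0 := by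
      intro u hu
      rw [hy u, if_neg]
      rintro (rfl | rfl)
      · exact (hno u hu).1 rfl
      · exact (hno u hu).2 rfl
    have hy0 := functional_eq_zero lam (hpure s hs) (hlam s hs) y hzero
    have h1 : rowFun (lam v) y = 1 := by rw [hy v]; simp
    rw [hy0, map_zero] at h1
    exact one_ne_zero h1.symm
  by_cases hvw : v = w
  · subst hvw
    obtain ⟨s, hs, -, hvs⟩ := exists_facet_avoiding hK hli hcover hglue hempty
      (Finset.notMem_empty v)
    obtain ⟨u, hu, hu2⟩ := hfacetmeet s hs
    rcases hu2 with rfl | rfl <;> exact hvs hu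
  · refine not_isSeed hvw hK (fun τ hτ hvτ hwτ => ⟨?_, ?_⟩) hseed
    · obtain ⟨s, hs, hτs, hws⟩ := exists_facet_avoiding hK hli hcover hglue hτ hwτ
      obtain ⟨u, hu, hu2⟩ := hfacetmeet s hs
      rcases hu2 with rfl | rfl
      · exact hK s hs.1 _ (Finset.insert_subset hu hτs)
      · exact absurd hu hws
    · obtain ⟨s, hs, hτs, hvs⟩ := exists_facet_avoiding hK hli hcover hglue hτ hvτ
      obtain ⟨u, hu, hu2⟩ := hfacetmeet s hs
      rcases hu2 with rfl | rfl
      · exact absurd hu hvs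
      · exact hK s hs.1 _ (Finset.insert_subset hu hτs)

/-- Up to isomorphism there are only finitely many seed star-shaped simplicial spheres of
Picard number `ℓ` admitting a `ℤ₂`-characteristic map: there is a finite list containing a
representative of each. -/
theorem stmt_9 (ℓ : ℕ) (hl : 1 ≤ ℓ) :
    ∃ L : List (Σ m : ℕ, Set (Finset (Fin m))),
      ∀ (n m : ℕ) (K : Set (Finset (Fin m))),
        IsStarShapedSphere K n → m = n + ℓ → IsSeed K →
        (∃ lam : Fin m → Fin n → ZMod 2, ∀ s, IsFacet K s →
          LinearIndependent (ZMod 2) fun i : {x : Fin m // x ∈ s} => lam i.val) →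
        ∃ p ∈ L, ∃ e : Fin m ≃ Fin p.1,
          ∀ s : Finset (Fin m), s ∈ K ↔ s.image e ∈ p.2 := by
  classical
  letI inst : ∀ m' : ℕ, Fintype (Set (Finset (Fin m'))) := fun m' => Fintype.ofFinite _
  refine ⟨(List.range (2 ^ ℓ)).flatMap
    (fun m' => (Finset.univ : Finset (Set (Finset (Fin m')))).toList.map (Sigma.mk m')), ?_⟩
  intro n m K hS hmn hseed hchar
  have hm : m < 2 ^ ℓ := seed_bound hS hmn hseed hchar
  refine ⟨⟨m, K⟩, ?_, Equiv.refl _, fun s => ?_⟩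
  · rw [List.mem_flatMap]
    exact ⟨m, List.mem_range.2 hm,
      List.mem_map_of_mem (Finset.mem_toList.2 (Finset.mem_univ _))⟩
  · simp

end Main
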